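/- arXiv:2602.18160 — 5 statements merged into one kernel-verified Lean document; each statement's English description precedes it below -/
import Mathlib

section
/- Let f : F → {0,1} be a Boolean classifier on a finite product input space F = X_1 × ⋯ × X_n with X_i = {0,1} for all i, and let D be a product (feature-independent) distribution on F. Let S ⊆ {1,…,n}, let i, t ∉ S be distinct, and write Δ_t(T) = v^g_suff(T ∪ {t}) − v^g_suff(T). Then Δ_t(S ∪ {i}) − Δ_t(S) = Σ_{a} 2 · Pr(z_S = a) · P₁ P₀ Q₁ Q₀ · ( g₁₁(a) − g₁₀(a) − g₀₁(a) + g₀₀(a) )² ≥ 0, where the sum ranges over tuples a of values for S with Pr(z_S = a) > 0, P_b = Pr(z_t = b), Q_b = Pr(z_i = b), g_{b'b}(a) = Pr_{z∼D}(f(z) = 1 | z_S = a, z_i = b', z_t = b), and summands for which P₁P₀Q₁Q₀ = 0 are taken to be 0. -/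
open Finset

open Classical in
/-- Probability of an event over a finite space with mass function `P`. -/
noncomputable def prEvent {F : Type*} [Fintype F] (P : F → ℝ) (A : F → Prop) : ℝ :=
  ∑ z, if A z then P z else 0

open Classical in
/-- Conditional probability `Pr(A | B) = Pr(A ∩ B) / Pr(B)` over a finite space,
with mass function `P`. -/
noncomputable def condPr {F : Type*} [Fintype F] (P : F → ℝ) (A B : F → Prop) : ℝ :=
  (∑ z, if A z ∧ B z then P z else 0) / (∑ z, if B z then P z else 0)

open Classical in
/-- The global sufficient value function on `{0,1}^n`:
`v^g_suff(S) = Σ_{x : P x > 0} P x · Pr_{z∼D}(f z = f x | z_S = x_S)`. -/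
noncomputable def vgSuff {n : ℕ} (f : (Fin n → Bool) → Bool)
    (P : (Fin n → Bool) → ℝ) (S : Finset (Fin n)) : ℝ :=
  ∑ x ∈ Finset.univ.filter (fun x => 0 < P x),
    P x * condPr P (fun z => f z = f x) (fun z => ∀ i ∈ S, z i = x i)

open Classical in
/-- `Pr(z_S = a)`, the probability that the coordinates in `S` take the values
prescribed by the tuple `a : S → {0,1}`. -/
noncomputable def prOn {n : ℕ} (P : (Fin n → Bool) → ℝ)
    (S : Finset (Fin n)) (a : S → Bool) : ℝ :=
  ∑ z : Fin n → Bool, if (∀ i : S, z i = a i) then P z else 0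

/-!
On a cell `C` of the partition of `{0,1}^n` by the values of `z_T`, with `W = Pr(C)` and
`g = Pr(f = 1 | C)`, the sum defining `v^g_suff(T)` contributes `W (g² + (1 - g)²)`. For a
product distribution the cell `z_S = a, z_i = b', z_t = b` has mass `w Q_{b'} R_b`, where
`w = Pr(z_S = a)`, `Q_{b'} = Pr(z_i = b')`, `R_b = Pr(z_t = b)`, and the conditional probabilities
of `f = 1` on the coarser cells are the corresponding `Q`- and `R`-averages of the `g_{b'b}`.
The second difference is then a polynomial identity in `w, Q, R` and the `g_{b'b}`.
-/
/-- The contribution `Σ_{x ∈ C} P x · Pr(f z = f x | z ∈ C)` of a cell `C` of mass `W` on which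
`f = 1` has mass `N`. -/
noncomputable def cellAgreement (N W : ℝ) : ℝ := (N ^ 2 + (W - N) ^ 2) / W

lemma cellAgreement_mul_self (W x : ℝ) :
    cellAgreement (W * x) W = W * (x ^ 2 + (1 - x) ^ 2) := by
  rcases eq_or_ne W 0 with rfl | hW
  · simp [cellAgreement]
  · rw [cellAgreement]
    field_simp

lemma cellAgreement_second_difference (w q₁ q₀ r₁ r₀ g₁₁ g₁₀ g₀₁ g₀₀ : ℝ)
    (hq : q₁ + q₀ = 1) (hr : r₁ + r₀ = 1) :
    (cellAgreement (w * q₁ * r₁ * g₁₁) (w * q₁ * r₁)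
        + cellAgreement (w * q₁ * r₀ * g₁₀) (w * q₁ * r₀)
        + (cellAgreement (w * q₀ * r₁ * g₀₁) (w * q₀ * r₁)
          + cellAgreement (w * q₀ * r₀ * g₀₀) (w * q₀ * r₀))
      - (cellAgreement (w * q₁ * (r₁ * g₁₁ + r₀ * g₁₀)) (w * q₁)
        + cellAgreement (w * q₀ * (r₁ * g₀₁ + r₀ * g₀₀)) (w * q₀)))
    - (cellAgreement (w * r₁ * (q₁ * g₁₁ + q₀ * g₀₁)) (w * r₁)
        + cellAgreement (w * r₀ * (q₁ * g₁₀ + q₀ * g₀₀)) (w * r₀)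
      - cellAgreement (w * (q₁ * r₁ * g₁₁ + q₁ * r₀ * g₁₀ + q₀ * r₁ * g₀₁ + q₀ * r₀ * g₀₀)) w)
    = 2 * w * r₁ * r₀ * q₁ * q₀ * (g₁₁ - g₁₀ - g₀₁ + g₀₀) ^ 2 := by
  simp only [cellAgreement_mul_self]
  obtain rfl : q₀ = 1 - q₁ := by linarith
  obtain rfl : r₀ = 1 - r₁ := by linarith
  ring

section FiniteProbability

variable {Ω : Type*} [Fintype Ω] {P : Ω → ℝ}

lemma prEvent_nonneg (hP0 : ∀ x, 0 ≤ P x) (A : Ω → Prop) : 0 ≤ prEvent P A :=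
  sum_nonneg fun z _ => by split_ifs <;> simp [hP0 z]

lemma prEvent_mono (hP0 : ∀ x, 0 ≤ P x) {A B : Ω → Prop} (h : ∀ z, A z → B z) :
    prEvent P A ≤ prEvent P B :=
  sum_le_sum fun z _ => by split_ifs <;> grind

lemma prEvent_eq_add (A : Ω → Prop) (c : Ω → Bool) :
    prEvent P A
      = prEvent P (fun z => A z ∧ c z = true) + prEvent P (fun z => A z ∧ c z = false) := by
  rw [prEvent, prEvent, prEvent, ← sum_add_distrib]
  refine sum_congr rfl fun z _ => ?_
  cases c z <;> split_ifs <;> simp_all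

lemma prEvent_eq_true_add_prEvent_eq_false (c : Ω → Bool) :
    prEvent P (fun z => c z = true) + prEvent P (fun z => c z = false) = ∑ x, P x := by
  have h := prEvent_eq_add (P := P) (fun _ => True) c
  simp only [true_and] at h
  rw [← h]
  simp [prEvent]

lemma condPr_eq_div (A B : Ω → Prop) :
    condPr P A B = prEvent P (fun z => A z ∧ B z) / prEvent P B := by
  unfold condPr prEvent
  congr! 3

lemma prEvent_and_eq_mul_condPr (hP0 : ∀ x, 0 ≤ P x) (A B : Ω → Prop) :
    prEvent P (fun z => A z ∧ B z) = prEvent P B * condPr P A B := by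
  rw [condPr_eq_div]
  rcases eq_or_ne (prEvent P B) 0 with hB | hB
  · rw [hB, zero_mul]
    exact le_antisymm (hB ▸ prEvent_mono hP0 fun z h => h.2) (prEvent_nonneg hP0 _)
  · rw [mul_div_cancel₀ _ hB]

lemma sum_mul_comp_eq_sum_prEvent_mul {κ : Type*} [Fintype κ] [DecidableEq κ]
    (ℓ : Ω → κ) (h : κ → ℝ) :
    ∑ x, P x * h (ℓ x) = ∑ k, prEvent P (fun z => ℓ z = k) * h k := by
  rw [← sum_fiberwise univ ℓ]
  refine sum_congr rfl fun k _ => ?_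
  rw [sum_filter, prEvent, sum_mul]
  exact sum_congr rfl fun x _ => by split_ifs with hx <;> simp [hx]

end FiniteProbability

section ProductDistribution

variable {ι β : Type*} [Fintype ι] [DecidableEq ι] {P : (ι → β) → ℝ} {p : ι → β → ℝ}

lemma mul_eq_mul_piecewise (hprod : ∀ x, P x = ∏ j, p j (x j)) (U : Finset ι) (z w : ι → β) :
    P z * P w = P (U.piecewise z w) * P (U.piecewise w z) := by
  simp only [hprod, ← prod_mul_distrib]
  refine prod_congr rfl fun j _ => ?_
  by_cases hj : j ∈ U <;> simp [hj, mul_comm]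

/-- Exchanging the `U`-coordinates of two independent samples `(z, w)` preserves `P z * P w`
and turns `A z ∧ B w` into `A z' ∧ B z'`. -/
theorem prEvent_and_of_dependsOn [Fintype β] (hP1 : ∑ x, P x = 1)
    (hprod : ∀ x, P x = ∏ j, p j (x j)) (U : Finset ι) {A B : (ι → β) → Prop}
    (hA : DependsOn A U) (hB : DependsOn B (↑U)ᶜ) :
    prEvent P (fun z => A z ∧ B z) = prEvent P A * prEvent P B := by
  set σ : (ι → β) × (ι → β) → (ι → β) × (ι → β) :=
    fun zw => (U.piecewise zw.1 zw.2, U.piecewise zw.2 zw.1)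
  have hσ : σ.Involutive := fun zw => by simp [σ, piecewise_same]
  have hA' : ∀ z w, A (U.piecewise z w) = A z :=
    fun z w => hA fun j hj => U.piecewise_eq_of_mem _ _ hj
  have hB' : ∀ z w, B (U.piecewise w z) = B z :=
    fun z w => hB fun j hj => U.piecewise_eq_of_notMem _ _ hj
  rw [← mul_one (prEvent P (fun z => A z ∧ B z)), ← hP1, prEvent, prEvent, prEvent,
    sum_mul_sum, sum_mul_sum, ← Fintype.sum_prod_type', ← Fintype.sum_prod_type']
  refine Fintype.sum_bijective σ hσ.bijective _ _ fun ⟨z, w⟩ => ?_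
  have hzw := mul_eq_mul_piecewise hprod U z w
  simp only [σ]
  split_ifs <;> simp_all

lemma prEvent_apply_eq_and_apply_eq [Fintype β] (hP1 : ∑ x, P x = 1)
    (hprod : ∀ x, P x = ∏ j, p j (x j)) {i t : ι} (hit : i ≠ t) (b' b : β) :
    prEvent P (fun z => z i = b' ∧ z t = b)
      = prEvent P (fun z => z i = b') * prEvent P (fun z => z t = b) :=
  prEvent_and_of_dependsOn hP1 hprod {i} (fun x y h => by rw [h i (by simp)])
    (fun x y h => by rw [h t (by simpa using hit.symm)])

end ProductDistribution

theorem vgSuff_eq_sum_cellAgreement {n : ℕ} (f : (Fin n → Bool) → Bool)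
    {P : (Fin n → Bool) → ℝ} (hP0 : ∀ x, 0 ≤ P x) {A : Type*} [Fintype A] [DecidableEq A]
    (π : (Fin n → Bool) → A) (T : Finset (Fin n))
    (hπ : ∀ z x, (∀ j ∈ T, z j = x j) ↔ π z = π x) :
    vgSuff f P T = ∑ a, cellAgreement (prEvent P (fun z => f z = true ∧ π z = a))
      (prEvent P (fun z => π z = a)) := by
  have hfalse : ∀ a, prEvent P (fun z => f z = false ∧ π z = a)
      = prEvent P (fun z => π z = a) - prEvent P (fun z => f z = true ∧ π z = a) := by
    intro a
    rw [prEvent_eq_add (fun z => π z = a) f]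
    simp only [and_comm]
    ring
  calc vgSuff f P T
      = ∑ x, P x * condPr P (fun z => f z = f x) (fun z => π z = π x) := by
        rw [vgSuff, sum_filter_of_ne]
        · simp only [hπ]
        · exact fun x _ hx => (hP0 x).lt_of_ne (left_ne_zero_of_mul hx).symm
    _ = ∑ ab : A × Bool, prEvent P (fun z => (π z, f z) = ab) *
          condPr P (fun z => f z = ab.2) (fun z => π z = ab.1) :=
        sum_mul_comp_eq_sum_prEvent_mul (fun x => (π x, f x))
          fun ab => condPr P (fun z => f z = ab.2) (fun z => π z = ab.1)
    _ = ∑ a, cellAgreement (prEvent P (fun z => f z = true ∧ π z = a))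
          (prEvent P (fun z => π z = a)) := by
        simp only [Fintype.sum_prod_type, Fintype.sum_bool, condPr_eq_div, Prod.mk.injEq,
          and_comm (a := π _ = _), hfalse, cellAgreement]
        refine sum_congr rfl fun a _ => ?_
        ring

section SecondDifference

variable {n : ℕ} {P : (Fin n → Bool) → ℝ} {p : Fin n → Bool → ℝ}

lemma prEvent_forall_apply_eq {S : Finset (Fin n)} (a : S → Bool) :
    prEvent P (fun z => ∀ j : S, z j = a j) = prOn P S a := by
  unfold prEvent prOn
  congr!

lemma prEvent_forall_apply_eq_and (hP1 : ∑ x, P x = 1) (hprod : ∀ x, P x = ∏ j, p j (x j))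
    {S : Finset (Fin n)} (a : S → Bool) {B : (Fin n → Bool) → Prop} (hB : DependsOn B (↑S)ᶜ) :
    prEvent P (fun z => (∀ j : S, z j = a j) ∧ B z) = prOn P S a * prEvent P B := by
  rw [prEvent_and_of_dependsOn hP1 hprod S
    (fun x y h => propext <| forall_congr' fun j => by rw [h j j.2]) hB, prEvent_forall_apply_eq]

lemma prEvent_forall_apply_eq_and_apply_eq (hP1 : ∑ x, P x = 1)
    (hprod : ∀ x, P x = ∏ j, p j (x j)) {S : Finset (Fin n)} {i : Fin n} (hi : i ∉ S)
    (a : S → Bool) (b : Bool) :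
    prEvent P (fun z => (∀ j : S, z j = a j) ∧ z i = b)
      = prOn P S a * prEvent P (fun z => z i = b) :=
  prEvent_forall_apply_eq_and hP1 hprod a fun x y h => by rw [h i hi]

lemma prEvent_cell (hP1 : ∑ x, P x = 1) (hprod : ∀ x, P x = ∏ j, p j (x j))
    {S : Finset (Fin n)} {i t : Fin n} (hi : i ∉ S) (ht : t ∉ S) (hit : i ≠ t)
    (a : S → Bool) (b' b : Bool) :
    prEvent P (fun z => (∀ j : S, z j = a j) ∧ z i = b' ∧ z t = b)
      = prOn P S a * prEvent P (fun z => z i = b') * prEvent P (fun z => z t = b) := by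
  rw [prEvent_forall_apply_eq_and hP1 hprod a (fun x y h => by rw [h i hi, h t ht]),
    prEvent_apply_eq_and_apply_eq hP1 hprod hit, mul_assoc]

lemma prEvent_and_cell (hP0 : ∀ x, 0 ≤ P x) (hP1 : ∑ x, P x = 1)
    (hprod : ∀ x, P x = ∏ j, p j (x j)) {S : Finset (Fin n)} {i t : Fin n} (hi : i ∉ S)
    (ht : t ∉ S) (hit : i ≠ t) (A : (Fin n → Bool) → Prop) (a : S → Bool) (b' b : Bool) :
    prEvent P (fun z => A z ∧ (∀ j : S, z j = a j) ∧ z i = b' ∧ z t = b)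
      = prOn P S a * prEvent P (fun z => z i = b') * prEvent P (fun z => z t = b)
        * condPr P A (fun z => (∀ j : S, z j = a j) ∧ z i = b' ∧ z t = b) := by
  rw [prEvent_and_eq_mul_condPr hP0, prEvent_cell hP1 hprod hi ht hit]

theorem vgSuff_second_difference_eq (f : (Fin n → Bool) → Bool)
    (hP0 : ∀ x, 0 ≤ P x) (hP1 : ∑ x, P x = 1)
    (hprod : ∀ x, P x = ∏ j, p j (x j))
    (S : Finset (Fin n)) (i t : Fin n)
    (hi : i ∉ S) (ht : t ∉ S) (hit : i ≠ t) :
    ((vgSuff f P (insert t (insert i S)) - vgSuff f P (insert i S)) -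
        (vgSuff f P (insert t S) - vgSuff f P S) =
      ∑ a ∈ Finset.univ.filter (fun a : S → Bool => 0 < prOn P S a),
        2 * prOn P S a
          * prEvent P (fun z => z t = true) * prEvent P (fun z => z t = false)
          * prEvent P (fun z => z i = true) * prEvent P (fun z => z i = false)
          * (condPr P (fun z => f z = true)
                (fun z => (∀ j : S, z j = a j) ∧ z i = true ∧ z t = true)
              - condPr P (fun z => f z = true)
                  (fun z => (∀ j : S, z j = a j) ∧ z i = true ∧ z t = false)
              - condPr P (fun z => f z = true)
                  (fun z => (∀ j : S, z j = a j) ∧ z i = false ∧ z t = true)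
              + condPr P (fun z => f z = true)
                  (fun z => (∀ j : S, z j = a j) ∧ z i = false ∧ z t = false)) ^ 2) := by
  let π₀ : (Fin n → Bool) → (S → Bool) := fun z j => z j
  rw [vgSuff_eq_sum_cellAgreement f hP0 (fun z => (π₀ z, z i, z t)) _ (by
        simp [π₀, Prod.ext_iff, funext_iff]; tauto),
      vgSuff_eq_sum_cellAgreement f hP0 (fun z => (π₀ z, z i)) _ (by
        simp [π₀, Prod.ext_iff, funext_iff]; tauto),
      vgSuff_eq_sum_cellAgreement f hP0 (fun z => (π₀ z, z t)) _ (by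
        simp [π₀, Prod.ext_iff, funext_iff]; tauto),
      vgSuff_eq_sum_cellAgreement f hP0 π₀ _ (by simp [π₀, funext_iff])]
  simp only [π₀, Prod.mk.injEq, funext_iff, Fintype.sum_prod_type, Fintype.sum_bool,
    ← sum_sub_distrib, sum_filter]
  refine sum_congr rfl fun a _ => ?_
  have hN₃ := prEvent_and_cell hP0 hP1 hprod hi ht hit (fun z => f z = true) a
  have hW₃ := prEvent_cell hP1 hprod hi ht hit a
  set w := prOn P S a
  set Q := fun b => prEvent P (fun z => z i = b)
  set R := fun b => prEvent P (fun z => z t = b)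
  set g := fun b' b => condPr P (fun z => f z = true)
    (fun z => (∀ j : S, z j = a j) ∧ z i = b' ∧ z t = b)
  have hN₁ : ∀ b', prEvent P (fun z => f z = true ∧ (∀ j : S, z j = a j) ∧ z i = b')
      = w * Q b' * (R true * g b' true + R false * g b' false) := fun b' => by
    rw [prEvent_eq_add _ (· t)]
    simp only [and_assoc, hN₃]
    ring
  have hN₂ : ∀ b, prEvent P (fun z => f z = true ∧ (∀ j : S, z j = a j) ∧ z t = b)
      = w * R b * (Q true * g true b + Q false * g false b) := fun b => by
    rw [prEvent_eq_add _ (· i)]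
    simp only [and_assoc, and_comm (a := _ = b), hN₃]
    ring
  have hN₀ : prEvent P (fun z => f z = true ∧ ∀ j : S, z j = a j)
      = w * (Q true * R true * g true true + Q true * R false * g true false
        + Q false * R true * g false true + Q false * R false * g false false) := by
    rw [prEvent_eq_add _ (· i)]
    simp only [and_assoc, hN₁]
    ring
  simp only [hN₀, hN₁, hN₂, hN₃, hW₃, prEvent_forall_apply_eq_and_apply_eq hP1 hprod hi,
    prEvent_forall_apply_eq_and_apply_eq hP1 hprod ht, prEvent_forall_apply_eq]
  rw [cellAgreement_second_difference _ _ _ _ _ _ _ _ _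
      ((prEvent_eq_true_add_prEvent_eq_false _).trans hP1)
      ((prEvent_eq_true_add_prEvent_eq_false _).trans hP1)]
  split_ifs with hw
  · rfl
  · simp [le_antisymm (not_lt.1 hw) ((prEvent_nonneg hP0 _).trans_eq (prEvent_forall_apply_eq a))]

end SecondDifference

theorem vgSuff_second_difference_general {n : ℕ}
    (f : (Fin n → Bool) → Bool) (P : (Fin n → Bool) → ℝ)
    (hP0 : ∀ x, 0 ≤ P x) (hP1 : ∑ x, P x = 1)
    (p : Fin n → Bool → ℝ)
    (hprod : ∀ x, P x = ∏ j, p j (x j))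
    (S : Finset (Fin n)) (i t : Fin n)
    (hi : i ∉ S) (ht : t ∉ S) (hit : i ≠ t) :
    ((vgSuff f P (insert t (insert i S)) - vgSuff f P (insert i S)) -
        (vgSuff f P (insert t S) - vgSuff f P S) =
      ∑ a ∈ Finset.univ.filter (fun a : S → Bool => 0 < prOn P S a),
        2 * prOn P S a
          * prEvent P (fun z => z t = true) * prEvent P (fun z => z t = false)
          * prEvent P (fun z => z i = true) * prEvent P (fun z => z i = false)
          * (condPr P (fun z => f z = true)
                (fun z => (∀ j : S, z j = a j) ∧ z i = true ∧ z t = true)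
              - condPr P (fun z => f z = true)
                  (fun z => (∀ j : S, z j = a j) ∧ z i = true ∧ z t = false)
              - condPr P (fun z => f z = true)
                  (fun z => (∀ j : S, z j = a j) ∧ z i = false ∧ z t = true)
              + condPr P (fun z => f z = true)
                  (fun z => (∀ j : S, z j = a j) ∧ z i = false ∧ z t = false)) ^ 2) ∧
    0 ≤ (vgSuff f P (insert t (insert i S)) - vgSuff f P (insert i S)) -
        (vgSuff f P (insert t S) - vgSuff f P S) := by
  have h := vgSuff_second_difference_eq f hP0 hP1 hprod S i t hi ht hit
  refine ⟨h, h ▸ sum_nonneg fun a ha => ?_⟩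
  have hw : 0 ≤ 2 * prOn P S a := mul_nonneg zero_le_two (mem_filter.1 ha).2.le
  have hE := prEvent_nonneg hP0
  exact mul_nonneg (mul_nonneg (mul_nonneg (mul_nonneg (mul_nonneg hw (hE _)) (hE _)) (hE _))
    (hE _)) (sq_nonneg _)

open Classical in
/-- on `{0,1}^n` with a product distribution, writing
`Δ_t(T) = v^g_suff(T ∪ {t}) − v^g_suff(T)`, for distinct `i, t ∉ S` one has
`Δ_t(S ∪ {i}) − Δ_t(S)
  = Σ_a 2·Pr(z_S = a)·P₁P₀Q₁Q₀·(g₁₁(a) − g₁₀(a) − g₀₁(a) + g₀₀(a))² ≥ 0`,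
where `P_b = Pr(z_t = b)`, `Q_b = Pr(z_i = b)` and
`g_{b'b}(a) = Pr(f z = 1 | z_S = a, z_i = b', z_t = b)`. -/
theorem vgSuff_second_difference {n : ℕ}
    (f : (Fin n → Bool) → Bool) (P : (Fin n → Bool) → ℝ)
    (hP0 : ∀ x, 0 ≤ P x) (hP1 : ∑ x, P x = 1)
    (p : Fin n → Bool → ℝ) (hp0 : ∀ j b, 0 ≤ p j b)
    (hprod : ∀ x, P x = ∏ j, p j (x j))
    (S : Finset (Fin n)) (i t : Fin n)
    (hi : i ∉ S) (ht : t ∉ S) (hit : i ≠ t) :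
    ((vgSuff f P (insert t (insert i S)) - vgSuff f P (insert i S)) -
        (vgSuff f P (insert t S) - vgSuff f P S) =
      ∑ a ∈ Finset.univ.filter (fun a : S → Bool => 0 < prOn P S a),
        2 * prOn P S a
          * prEvent P (fun z => z t = true) * prEvent P (fun z => z t = false)
          * prEvent P (fun z => z i = true) * prEvent P (fun z => z i = false)
          * (condPr P (fun z => f z = true)
                (fun z => (∀ j : S, z j = a j) ∧ z i = true ∧ z t = true)
              - condPr P (fun z => f z = true)
                  (fun z => (∀ j : S, z j = a j) ∧ z i = true ∧ z t = false)
              - condPr P (fun z => f z = true)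
                  (fun z => (∀ j : S, z j = a j) ∧ z i = false ∧ z t = true)
              + condPr P (fun z => f z = true)
                  (fun z => (∀ j : S, z j = a j) ∧ z i = false ∧ z t = false)) ^ 2) ∧
    0 ≤ (vgSuff f P (insert t (insert i S)) - vgSuff f P (insert i S)) -
        (vgSuff f P (insert t S) - vgSuff f P S) :=
  vgSuff_second_difference_general f P hP0 hP1 p hprod S i t hi ht hit
end

section
/- Without the feature-independence assumption, the global sufficient value function need not be supermodular: let F = {0,1}², f(x₁,x₂) = x₁, and let D be the distribution with Pr(0,0) = 2/5, Pr(0,1) = 1/5, Pr(1,0) = 1/10, Pr(1,1) = 3/10. Then v^g_suff({2}) − v^g_suff(∅) = 2/25 > 0 = v^g_suff({1,2}) − v^g_suff({1}), so v^g_suff is not supermodular (take S = ∅ ⊆ S' = {1} and i = 2). -/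
/-!
Feature 1 alone determines `f`, so `v({1}) = v({1,2}) = 1` and feature 2 adds nothing on top of
feature 1. On its own, however, feature 2 is correlated with feature 1 under `D`, so revealing it
raises `v` from `Pr(f = 0)² + Pr(f = 1)² = 13/25` to `3/5`.
-/

open Finset

lemma Fintype.sum_fin_two_bool {M : Type*} [AddCommMonoid M] (g : (Fin 2 → Bool) → M) :
    ∑ z, g z = g ![true, true] + g ![true, false] + g ![false, true] + g ![false, false] := by
  rw [← (piFinTwoEquiv fun _ => Bool).symm.sum_comp g]
  simp [Fintype.sum_prod_type, piFinTwoEquiv, add_assoc]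

open Classical in
lemma condPr_eq_one_of_forall_imp {F : Type*} [Fintype F] {P : F → ℝ} {A B : F → Prop}
    (hAB : ∀ z, B z → A z) (hB : (∑ z, if B z then P z else 0) ≠ 0) :
    condPr P A B = 1 := by
  have hnum : (∑ z, if A z ∧ B z then P z else 0) = ∑ z, if B z then P z else 0 :=
    Finset.sum_congr rfl fun z _ => if_congr ⟨And.right, fun h => ⟨hAB z h, h⟩⟩ rfl rfl
  rw [condPr, hnum, div_self hB]

lemma vgSuff_eq_sum_of_pos {n : ℕ} {f : (Fin n → Bool) → Bool} {P : (Fin n → Bool) → ℝ}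
    (hP : ∀ x, 0 < P x) (S : Finset (Fin n)) :
    vgSuff f P S = ∑ x, P x * condPr P (fun z => f z = f x) (fun z => ∀ i ∈ S, z i = x i) := by
  rw [vgSuff, Finset.filter_true_of_mem fun x _ => hP x]

lemma vgSuff_eq_one_of_determines {n : ℕ} {f : (Fin n → Bool) → Bool}
    {P : (Fin n → Bool) → ℝ} {S : Finset (Fin n)} (hP : ∀ x, 0 ≤ P x) (hP1 : ∑ x, P x = 1)
    (hS : ∀ x z, (∀ i ∈ S, z i = x i) → f z = f x) :
    vgSuff f P S = 1 := by
  have hcond : ∀ x, 0 < P x →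
      condPr P (fun z => f z = f x) (fun z => ∀ i ∈ S, z i = x i) = 1 := by
    intro x hx
    refine condPr_eq_one_of_forall_imp (hS x) (ne_of_gt (hx.trans_le ?_))
    refine le_trans ?_ (Finset.single_le_sum (fun z _ => ?_) (Finset.mem_univ x))
    · rw [if_pos fun _ _ => rfl]
    · split_ifs
      exacts [hP z, le_rfl]
  calc vgSuff f P S = ∑ x ∈ Finset.univ.filter (fun x => 0 < P x), P x :=
        Finset.sum_congr rfl fun x hx => by
          rw [hcond x (Finset.mem_filter.mp hx).2, mul_one]
    _ = ∑ x, P x := Finset.sum_filter_of_ne fun x _ hx => lt_of_le_of_ne (hP x) (Ne.symm hx)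
    _ = 1 := hP1

noncomputable def counterexampleDist : (Fin 2 → Bool) → ℝ := fun z =>
  if z 0 = false ∧ z 1 = false then 2 / 5
  else if z 0 = false ∧ z 1 = true then 1 / 5
  else if z 0 = true ∧ z 1 = false then 1 / 10
  else 3 / 10

lemma counterexampleDist_pos (x : Fin 2 → Bool) : 0 < counterexampleDist x := by
  unfold counterexampleDist
  split_ifs <;> norm_num

lemma sum_counterexampleDist : ∑ x, counterexampleDist x = 1 := by
  norm_num [Fintype.sum_fin_two_bool, counterexampleDist]

lemma vgSuff_counterexample_of_mem {S : Finset (Fin 2)} (hS : 0 ∈ S) :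
    vgSuff (fun z => z 0) counterexampleDist S = 1 :=
  vgSuff_eq_one_of_determines (fun x => (counterexampleDist_pos x).le) sum_counterexampleDist
    fun _ _ h => h 0 hS

lemma vgSuff_counterexample_empty :
    vgSuff (fun z => z 0) counterexampleDist ∅ = 13 / 25 := by
  rw [vgSuff_eq_sum_of_pos counterexampleDist_pos]
  norm_num [condPr, Fintype.sum_fin_two_bool, counterexampleDist]

lemma vgSuff_counterexample_singleton_one :
    vgSuff (fun z => z 0) counterexampleDist {1} = 3 / 5 := by
  rw [vgSuff_eq_sum_of_pos counterexampleDist_pos]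
  norm_num [condPr, Fintype.sum_fin_two_bool, counterexampleDist]

/-- without feature independence, `v^g_suff` need not be
supermodular.  With `F = {0,1}²` (feature 1 is index `0`, feature 2 is index
`1`), `f(x₁,x₂) = x₁`, and `Pr(0,0) = 2/5, Pr(0,1) = 1/5, Pr(1,0) = 1/10,
Pr(1,1) = 3/10`, we have `v^g_suff({2}) − v^g_suff(∅) = 2/25 > 0 =
v^g_suff({1,2}) − v^g_suff({1})`, so `v^g_suff` is not supermodular
(take `S = ∅ ⊆ S' = {1}` and `i = 2`). -/
theorem vgSuff_not_supermodular_without_independence :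
    let f : (Fin 2 → Bool) → Bool := fun z => z 0
    let P : (Fin 2 → Bool) → ℝ := fun z =>
      if z 0 = false ∧ z 1 = false then 2 / 5
      else if z 0 = false ∧ z 1 = true then 1 / 5
      else if z 0 = true ∧ z 1 = false then 1 / 10
      else 3 / 10
    vgSuff f P {1} - vgSuff f P (∅ : Finset (Fin 2)) = 2 / 25 ∧
    (0 : ℝ) < 2 / 25 ∧
    vgSuff f P {0, 1} - vgSuff f P {0} = 0 ∧
    ¬ (∀ (S S' : Finset (Fin 2)) (i : Fin 2), S ⊆ S' → i ∉ S' →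
        vgSuff f P (insert i S) - vgSuff f P S ≤
          vgSuff f P (insert i S') - vgSuff f P S') := by
  intro f P
  have h1 : vgSuff f P {1} = 3 / 5 := vgSuff_counterexample_singleton_one
  have h0 : vgSuff f P ∅ = 13 / 25 := vgSuff_counterexample_empty
  have h01 : vgSuff f P {0, 1} = 1 := vgSuff_counterexample_of_mem (by simp)
  have h0' : vgSuff f P {0} = 1 := vgSuff_counterexample_of_mem (by simp)
  refine ⟨by rw [h1, h0]; norm_num, by norm_num, by rw [h01, h0', sub_self], fun hsup => ?_⟩
  have := hsup ∅ {0} 1 (Finset.empty_subset _) (by decide)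
  rw [insert_empty_eq, Finset.pair_comm, h1, h0, h01, h0'] at this
  norm_num at this
end

section
/- Let k ∈ ℕ, n = 2k + 1, let f : {0,1}^n → {0,1} be the majority function defined by f(x) = 1 if Σ_{i=1}^n x_i ≥ k + 1 and f(x) = 0 otherwise, and let D be the uniform distribution on {0,1}^n. Then for every S ⊆ {1,…,n} with |S| = k and every i ∉ S, v^g_suff(S ∪ {i}) > v^g_suff(S), i.e., adding any coordinate to a set of size k strictly increases the global sufficient value function. -/
open Finset

section AuxVg
variable {n : ℕ}

lemma card_agree (S : Finset (Fin n)) (x : Fin n → Bool) :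
    (univ.filter fun z : Fin n → Bool => ∀ j ∈ S, z j = x j).card = 2 ^ (n - S.card) := by
  classical
  have h := Finset.card_bij'
    (i := fun (z : Fin n → Bool) (_ : z ∈ univ.filter fun z => ∀ j ∈ S, z j = x j) =>
      (fun j : {j : Fin n // j ∉ S} => z j.1))
    (j := fun (g : {j : Fin n // j ∉ S} → Bool) (_ : g ∈ (univ : Finset _)) =>
      (fun m : Fin n => if h : m ∈ S then x m else g ⟨m, h⟩))
    (hi := by intro a ha; exact mem_univ _)
    (hj := by
      intro g hg
      simp only [mem_filter, mem_univ, true_and]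
      intro j hj
      simp [hj])
    (left_inv := by
      intro z hz
      simp only [mem_filter, mem_univ, true_and] at hz
      funext m
      by_cases hm : m ∈ S
      · simp [hm, (hz m hm).symm]
      · simp [hm])
    (right_inv := by
      intro g hg
      funext m
      simp [m.2])
  rw [h]
  rw [Finset.card_univ, Fintype.card_fun]
  congr 1
  rw [Fintype.card_subtype_compl, Fintype.card_coe, Fintype.card_fin]


lemma vgSuff_eq (f : (Fin n → Bool) → Bool)
    (P : (Fin n → Bool) → ℝ) (hP : ∀ x, P x = 1 / 2 ^ n) (T : Finset (Fin n)) :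
    vgSuff f P T =
      (∑ x, ∑ z, if (f z = f x ∧ ∀ j ∈ T, z j = x j) then (1:ℝ) else 0)
        / (2 ^ n * 2 ^ (n - T.card)) := by
  classical
  have hc : (0:ℝ) < 1 / 2 ^ n := by positivity
  have hPpos : ∀ x, 0 < P x := fun x => by rw [hP]; exact hc
  have hfilter : (univ.filter fun x : Fin n → Bool => 0 < P x) = univ :=
    filter_true_of_mem (fun x _ => hPpos x)
  rw [vgSuff, hfilter, Finset.sum_div]
  refine Finset.sum_congr rfl (fun x _ => ?_)
  simp only [condPr]
  have hnum : (∑ z : Fin n → Bool, if (f z = f x ∧ ∀ i ∈ T, z i = x i) then P z else 0)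
      = (1 / 2 ^ n) * ∑ z : Fin n → Bool, if (f z = f x ∧ ∀ j ∈ T, z j = x j) then (1:ℝ) else 0 := by
    rw [Finset.mul_sum]
    exact Finset.sum_congr rfl (fun z _ => by rw [hP]; split <;> ring)
  have hden : (∑ z : Fin n → Bool, if (∀ i ∈ T, z i = x i) then P z else 0)
      = (1 / 2 ^ n) * 2 ^ (n - T.card) := by
    have e : (∑ z : Fin n → Bool, if (∀ i ∈ T, z i = x i) then P z else 0)
        = (1 / 2 ^ n) * ∑ z : Fin n → Bool, if (∀ i ∈ T, z i = x i) then (1:ℝ) else 0 := by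
      rw [Finset.mul_sum]
      exact Finset.sum_congr rfl (fun z _ => by rw [hP]; split <;> ring)
    rw [e, Finset.sum_boole]
    rw [card_agree T x]
    norm_num
  have clean : P x * ((∑ z : Fin n → Bool, if (f z = f x ∧ ∀ i ∈ T, z i = x i) then P z else 0) /
      (∑ z : Fin n → Bool, if (∀ i ∈ T, z i = x i) then P z else 0))
      = (∑ z : Fin n → Bool, if (f z = f x ∧ ∀ j ∈ T, z j = x j) then (1:ℝ) else 0)
        / (2 ^ n * 2 ^ (n - T.card)) := by
    rw [hnum, hden, hP]
    rw [mul_div_mul_left _ _ (ne_of_gt hc)]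
    rw [div_mul_div_comm, one_mul]
  convert clean using 4 <;>
    exact ite_congr rfl (fun _ => rfl) (fun _ => rfl)


end AuxVg


section AuxFlip
variable {n : ℕ}

def bflip (i : Fin n) (z : Fin n → Bool) : Fin n → Bool := Function.update z i (!(z i))

lemma bflip_self (i : Fin n) (z : Fin n → Bool) : bflip i z i = !(z i) :=
  Function.update_self _ _ _

lemma bflip_ne (i j : Fin n) (z : Fin n → Bool) (h : j ≠ i) : bflip i z j = z j :=
  Function.update_of_ne h _ _

lemma bflip_bflip (i : Fin n) (z : Fin n → Bool) : bflip i (bflip i z) = z := by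
  funext j
  by_cases h : j = i
  · subst h; simp [bflip]
  · simp [bflip, Function.update_of_ne h]

def bflipEquiv (i : Fin n) : Equiv (Fin n → Bool) (Fin n → Bool) :=
  ⟨bflip i, bflip i, bflip_bflip i, bflip_bflip i⟩

lemma maj_flip_le (k : ℕ) (f : (Fin n → Bool) → Bool)
    (hf : ∀ x, f x = decide (k + 1 ≤ (Finset.univ.filter (fun j => x j = true)).card))
    (i : Fin n) (y : Fin n → Bool) (hy : y i = true)
    (h : f (bflip i y) = true) : f y = true := by
  rw [hf] at h ⊢
  rw [decide_eq_true_iff] at h ⊢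
  refine le_trans h (Finset.card_le_card ?_)
  intro j hj
  simp only [mem_filter, mem_univ, true_and] at hj ⊢
  by_cases hji : j = i
  · subst hji
    rw [bflip_self, hy] at hj
    simp at hj
  · rwa [bflip_ne _ _ _ hji] at hj

end AuxFlip

lemma core_lt (k : ℕ) (f : (Fin (2 * k + 1) → Bool) → Bool)
    (hf : ∀ x, f x = decide (k + 1 ≤ (Finset.univ.filter (fun i => x i = true)).card))
    (S : Finset (Fin (2 * k + 1))) (hS : S.card = k)
    (i : Fin (2 * k + 1)) (hi : i ∉ S) :
    (∑ x, ∑ z, if (f z = f x ∧ ∀ j ∈ S, z j = x j) then (1:ℝ) else 0)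
      < 2 * (∑ x, ∑ z, if (f z = f x ∧ ∀ j ∈ insert i S, z j = x j) then (1:ℝ) else 0) := by
  classical
  set F : (Fin (2 * k + 1) → Bool) → ℝ := fun y => if f y = true then 1 else 0 with hF
  set w : (Fin (2 * k + 1) → Bool) → ℝ := fun y => F y - F (bflip i y) with hw
  set d : (Fin (2 * k + 1) → Bool) → (Fin (2 * k + 1) → Bool) → Prop :=
    fun x z => z i = x i ∧ ∀ j ∈ S, z j = x j with hd
  -- small boolean facts
  have hbool1 : ∀ a b : Bool, (¬ ((!a) = b)) ↔ a = b := by decide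
  have hbool2 : ∀ a b : Bool, ((!a) = (!b)) ↔ a = b := by decide
  have hbool3 : ∀ a : Bool, (¬ ((!a) = true)) ↔ a = true := by decide
  have hagree : ∀ x z : Fin (2 * k + 1) → Bool,
      (∀ j ∈ S, bflip i z j = x j) ↔ (∀ j ∈ S, z j = x j) := by
    intro x z
    refine forall₂_congr fun j hj => ?_
    rw [bflip_ne i j z (by rintro rfl; exact hi hj)]
  have hagree2 : ∀ x z : Fin (2 * k + 1) → Bool,
      (∀ j ∈ S, bflip i z j = bflip i x j) ↔ (∀ j ∈ S, z j = x j) := by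
    intro x z
    refine forall₂_congr fun j hj => ?_
    rw [bflip_ne i j z (by rintro rfl; exact hi hj),
      bflip_ne i j x (by rintro rfl; exact hi hj)]
  set A : ℝ := ∑ x, ∑ z, if (f z = f x ∧ ∀ j ∈ S, z j = x j) then (1:ℝ) else 0 with hA
  set B : ℝ := ∑ x, ∑ z, if (f z = f x ∧ ∀ j ∈ insert i S, z j = x j) then (1:ℝ) else 0 with hB
  set B' : ℝ := ∑ x, ∑ z, if (f z = f x ∧ d x z) then (1:ℝ) else 0 with hB'
  set C : ℝ := ∑ x, ∑ z, if (f z = f x ∧ ¬(z i = x i) ∧ ∀ j ∈ S, z j = x j) then (1:ℝ) else 0 with hC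
  set C' : ℝ := ∑ x, ∑ z, if (f (bflip i z) = f x ∧ d x z) then (1:ℝ) else 0 with hC'
  set T : ℝ := ∑ x, ∑ z, if d x z then ((2 * F x - 1) * w z) else 0 with hT
  -- B = B'
  have hBB' : B = B' := by
    refine Finset.sum_congr rfl fun x _ => Finset.sum_congr rfl fun z _ => ?_
    refine if_congr (and_congr Iff.rfl ?_) rfl rfl
    rw [hd, Finset.forall_mem_insert]
  -- A = B' + C
  have hABC : A = B' + C := by
    rw [hA, hB', hC, ← Finset.sum_add_distrib]
    refine Finset.sum_congr rfl fun x _ => ?_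
    rw [← Finset.sum_add_distrib]
    refine Finset.sum_congr rfl fun z _ => ?_
    by_cases h1 : f z = f x <;> by_cases h2 : ∀ j ∈ S, z j = x j <;>
      by_cases h3 : z i = x i <;> simp [hd, h1, h2, h3]
  -- C = C' (substitute z ↦ bflip i z)
  have hCC' : C = C' := by
    rw [hC, hC']
    refine Finset.sum_congr rfl fun x _ => ?_
    refine (Fintype.sum_equiv (bflipEquiv i)
      (fun z => if (f (bflip i z) = f x ∧ d x z) then (1:ℝ) else 0)
      (fun z => if (f z = f x ∧ ¬(z i = x i) ∧ ∀ j ∈ S, z j = x j) then (1:ℝ) else 0)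
      (fun z => ?_)).symm
    simp only [bflipEquiv, Equiv.coe_fn_mk]
    refine if_congr (and_congr Iff.rfl ?_) rfl rfl
    rw [hd, bflip_self, hbool1, hagree]
  -- B' = C' + T (pointwise boolean case analysis)
  have hB'C'T : B' = C' + T := by
    rw [hB', hC', hT, ← Finset.sum_add_distrib]
    refine Finset.sum_congr rfl fun x _ => ?_
    rw [← Finset.sum_add_distrib]
    refine Finset.sum_congr rfl fun z _ => ?_
    by_cases hc : d x z
    · cases h1 : f x <;> cases h2 : f z <;> cases h3 : f (bflip i z) <;>
        simp [eq_true hc, hw, hF, h1, h2, h3] <;> norm_num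
    · simp [hc]
  -- split T according to the value of x i, flip the `false` part
  set T1 : ℝ := ∑ x, ∑ z, if (d x z ∧ x i = true) then ((2 * F x - 1) * w z) else 0 with hT1
  set T0 : ℝ := ∑ x, ∑ z, if (d x z ∧ ¬(x i = true)) then ((2 * F x - 1) * w z) else 0 with hT0
  have hTsplit : T = T1 + T0 := by
    rw [hT, hT1, hT0, ← Finset.sum_add_distrib]
    refine Finset.sum_congr rfl fun x _ => ?_
    rw [← Finset.sum_add_distrib]
    refine Finset.sum_congr rfl fun z _ => ?_
    by_cases hc : d x z <;> by_cases hx : x i = true <;> simp [hc, hx]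
  have hT0' : T0 = ∑ x, ∑ z, if (d x z ∧ x i = true)
      then (((2 * F x - 1) - 2 * w x) * (-(w z))) else 0 := by
    rw [hT0]
    refine (Fintype.sum_equiv (bflipEquiv i)
      (fun x => ∑ z, if (d x z ∧ x i = true) then (((2 * F x - 1) - 2 * w x) * (-(w z))) else 0)
      (fun x => ∑ z, if (d x z ∧ ¬(x i = true)) then ((2 * F x - 1) * w z) else 0)
      (fun x => ?_)).symm
    simp only [bflipEquiv, Equiv.coe_fn_mk]
    refine Fintype.sum_equiv (bflipEquiv i)
      (fun z => if (d x z ∧ x i = true) then (((2 * F x - 1) - 2 * w x) * (-(w z))) else 0)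
      (fun z => if (d (bflip i x) z ∧ ¬(bflip i x i = true))
        then ((2 * F (bflip i x) - 1) * w z) else 0)
      (fun z => ?_)
    simp only [bflipEquiv, Equiv.coe_fn_mk]
    have hcond : (d x z ∧ x i = true) ↔
        (d (bflip i x) (bflip i z) ∧ ¬(bflip i x i = true)) := by
      rw [hd]
      simp only [bflip_self, hbool2, hbool3, hagree2]
    refine if_congr hcond ?_ rfl
    simp only [hw, bflip_bflip]
    ring
  have hTQ : T = ∑ x, ∑ z, if (d x z ∧ x i = true) then (2 * w x * w z) else 0 := by
    rw [hTsplit, hT0', hT1, ← Finset.sum_add_distrib]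
    refine Finset.sum_congr rfl fun x _ => ?_
    rw [← Finset.sum_add_distrib]
    refine Finset.sum_congr rfl fun z _ => ?_
    by_cases hc : d x z ∧ x i = true
    · rw [if_pos hc, if_pos hc, if_pos hc]
      simp only [hw]
      ring
    · simp [hc]
  -- nonnegativity of w on points with i-th coordinate true
  have hwnn : ∀ y : Fin (2 * k + 1) → Bool, y i = true → 0 ≤ w y := by
    intro y hy
    rw [hw]
    simp only [hF]
    by_cases h : f (bflip i y) = true
    · rw [maj_flip_le k f hf i y hy h]
      simp [h]
    · simp only [h, if_false]
      split <;> norm_num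
  -- the witness: the indicator of insert i S
  set χ : Fin (2 * k + 1) → Bool := fun j => decide (j ∈ insert i S) with hχ
  have hχi : χ i = true := by simp [hχ]
  have hfχ : f χ = true := by
    rw [hf, decide_eq_true_iff]
    have : (univ.filter fun j => χ j = true) = insert i S := by
      ext j
      simp [hχ]
    rw [this, card_insert_of_notMem hi, hS]
  have hfχ' : f (bflip i χ) = false := by
    rw [hf]
    have : (univ.filter fun j => bflip i χ j = true) = S := by
      ext j
      simp only [mem_filter, mem_univ, true_and]
      by_cases hj : j = i
      · subst hj
        rw [bflip_self, hχi]
        simp [hi]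
      · rw [bflip_ne i j χ hj]
        have hχj : χ j = decide (j ∈ insert i S) := rfl
        rw [hχj, decide_eq_true_iff, mem_insert]
        constructor
        · rintro (h | h)
          · exact absurd h hj
          · exact h
        · exact fun h => Or.inr h
    rw [this, hS]
    simp
  have hwχ : w χ = 1 := by
    rw [hw]
    simp [hF, hfχ, hfχ']
  -- T ≥ 2 > 0
  have hterm_nn : ∀ x z : Fin (2 * k + 1) → Bool,
      0 ≤ (if (d x z ∧ x i = true) then (2 * w x * w z) else 0) := by
    intro x z
    by_cases hc : d x z ∧ x i = true
    · rw [if_pos hc]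
      have hzi : z i = true := by
        have h1 := hc.1
        rw [hd] at h1
        rw [h1.1, hc.2]
      have h4 := hwnn x hc.2
      have h5 := hwnn z hzi
      positivity
    · rw [if_neg hc]
  have hTpos : 0 < T := by
    rw [hTQ]
    have hdχχ : d χ χ ∧ χ i = true := by
      refine ⟨?_, hχi⟩
      rw [hd]
      exact ⟨rfl, fun j _ => rfl⟩
    have hinner : (2:ℝ) ≤ ∑ z, if (d χ z ∧ χ i = true) then (2 * w χ * w z) else 0 := by
      have h1 : (if (d χ χ ∧ χ i = true) then (2 * w χ * w χ) else 0) = 2 := by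
        rw [if_pos hdχχ, hwχ]; ring
      calc (2:ℝ) = if (d χ χ ∧ χ i = true) then (2 * w χ * w χ) else 0 := h1.symm
        _ ≤ ∑ z, if (d χ z ∧ χ i = true) then (2 * w χ * w z) else 0 :=
          Finset.single_le_sum (fun z _ => hterm_nn χ z) (mem_univ χ)
    have houter : (2:ℝ) ≤ ∑ x, ∑ z, if (d x z ∧ x i = true) then (2 * w x * w z) else 0 := by
      calc (2:ℝ) ≤ ∑ z, if (d χ z ∧ χ i = true) then (2 * w χ * w z) else 0 := hinner
        _ ≤ ∑ x, ∑ z, if (d x z ∧ x i = true) then (2 * w x * w z) else 0 :=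
          Finset.single_le_sum
            (fun x _ => Finset.sum_nonneg (fun z _ => hterm_nn x z)) (mem_univ χ)
    linarith
  have hfin : A = 2 * B - T := by
    rw [hABC, hCC', hBB', hB'C'T]
    ring
  rw [hfin]
  linarith


/-- let `n = 2k+1`, let `f` be the majority function on `{0,1}^n`
(`f(x) = 1` iff at least `k+1` coordinates of `x` equal `1`), and let `D` be the
uniform distribution.  Then adding any coordinate `i ∉ S` to a set `S` of size
`k` strictly increases the global sufficient value function. -/
theorem vgSuff_majority_strict_increase (k : ℕ)
    (f : (Fin (2 * k + 1) → Bool) → Bool)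
    (hf : ∀ x, f x = decide (k + 1 ≤ (Finset.univ.filter (fun i => x i = true)).card))
    (P : (Fin (2 * k + 1) → Bool) → ℝ) (hP : ∀ x, P x = 1 / 2 ^ (2 * k + 1))
    (S : Finset (Fin (2 * k + 1))) (hS : S.card = k)
    (i : Fin (2 * k + 1)) (hi : i ∉ S) :
    vgSuff f P S < vgSuff f P (insert i S) := by
  classical
  have hS' : (insert i S).card = k + 1 := by rw [card_insert_of_notMem hi, hS]
  rw [vgSuff_eq f P hP S, vgSuff_eq f P hP (insert i S), hS, hS']
  have e1 : 2 * k + 1 - k = k + 1 := by omega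
  have e2 : 2 * k + 1 - (k + 1) = k := by omega
  rw [e1, e2]
  have hcore := core_lt k f hf S hS i hi
  rw [div_lt_div_iff₀ (by positivity) (by positivity)]
  have hpos : (0:ℝ) < 2 ^ (2 * k + 1) * 2 ^ k := by positivity
  calc (∑ x, ∑ z, if (f z = f x ∧ ∀ j ∈ S, z j = x j) then (1:ℝ) else 0)
        * (2 ^ (2 * k + 1) * 2 ^ k)
      < (2 * ∑ x, ∑ z, if (f z = f x ∧ ∀ j ∈ insert i S, z j = x j) then (1:ℝ) else 0)
        * (2 ^ (2 * k + 1) * 2 ^ k) := mul_lt_mul_of_pos_right hcore hpos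
    _ = (∑ x, ∑ z, if (f z = f x ∧ ∀ j ∈ insert i S, z j = x j) then (1:ℝ) else 0)
        * (2 ^ (2 * k + 1) * 2 ^ (k + 1)) := by rw [pow_succ]; ring
end

section
/- Let k ∈ ℕ, n = 2k + 1, let f : {0,1}^n → {0,1} be the majority function defined by f(x) = 1 if Σ_{i=1}^n x_i ≥ k + 1 and f(x) = 0 otherwise, and let D be the uniform distribution on {0,1}^n. Then there exists δ ∈ [0,1] such that the subset-minimal global δ-sufficient reasons for f are exactly the subsets S ⊆ {1,…,n} with |S| = k + 1; in particular, the number of subset-minimal global δ-sufficient reasons equals the binomial coefficient C(2k+1, k+1), which grows as Θ(2^n / √n). -/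
open Finset

/-- `S` is a subset-minimal global `δ`-sufficient reason:
`v^g_suff(S) ≥ δ` and `v^g_suff(S') < δ` for every proper subset `S' ⊊ S`. -/
def SubsetMinimalSufficient {n : ℕ} (f : (Fin n → Bool) → Bool)
    (P : (Fin n → Bool) → ℝ) (δ : ℝ) (S : Finset (Fin n)) : Prop :=
  δ ≤ vgSuff f P S ∧ ∀ S' : Finset (Fin n), S' ⊂ S → vgSuff f P S' < δ

/-!
For uniform `P`, `vgSuff f P S` is `N(S) / (2ⁿ 2^|Sᶜ|)`, where `N(S)` counts the pairs `(x, z)`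
with `z_S = x_S` and `f z = f x`. Fix `j ∉ S` and let `x'` be `x` with coordinate `j` flipped.
Flipping `z` in the pairs that disagree at `j` gives `N(S) = G + H`, where `G = N(S ∪ {j})` and
`H` counts the pairs agreeing on `S ∪ {j}` with `f z' = f x`. Flipping both entries of every pair
then shows that `2 (G - H)` is the sum over the pairs agreeing on `S ∪ {j}` of
`[f z = f x] + [f z' = f x'] - [f z' = f x] - [f z = f x']`. For monotone `f` the differences
`f x - f x'` and `f z - f z'` have the same sign on such pairs, so every summand is nonnegative,
and it equals `2` at `x = z` pivotal for `j`. Hence `N(S) < 2 N(S ∪ {j})`, which makes `vgSuff`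
strictly monotone. Majority is also symmetric, so `vgSuff` depends only on `|S|`; with `δ` its
value at size `k + 1`, the minimal reasons are exactly the sets of that size.
-/

open Function

lemma condPr_nonneg {F : Type*} [Fintype F] {P : F → ℝ} (hP : ∀ x, 0 ≤ P x) (A B : F → Prop) :
    0 ≤ condPr P A B :=
  div_nonneg (sum_nonneg fun z _ => by split_ifs <;> simp [hP])
    (sum_nonneg fun z _ => by split_ifs <;> simp [hP])

lemma condPr_le_one {F : Type*} [Fintype F] {P : F → ℝ} (hP : ∀ x, 0 ≤ P x) (A B : F → Prop) :
    condPr P A B ≤ 1 := by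
  refine div_le_one_of_le₀ (sum_le_sum fun z _ => ?_) (sum_nonneg fun z _ => ?_)
  · by_cases hB : B z <;> by_cases hA : A z <;> simp [hA, hB, hP]
  · split_ifs <;> simp [hP]

section SufficientValue

variable {n : ℕ} {f : (Fin n → Bool) → Bool} {P : (Fin n → Bool) → ℝ}

lemma vgSuff_nonneg (hP : ∀ x, 0 ≤ P x) (S : Finset (Fin n)) : 0 ≤ vgSuff f P S :=
  sum_nonneg fun x _ => mul_nonneg (hP x) (condPr_nonneg hP _ _)

lemma vgSuff_le_one (hP : ∀ x, 0 ≤ P x) (hP₁ : ∑ x, P x = 1) (S : Finset (Fin n)) :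
    vgSuff f P S ≤ 1 :=
  calc vgSuff f P S ≤ ∑ x ∈ univ.filter (fun x => 0 < P x), P x :=
        sum_le_sum fun x _ => mul_le_of_le_one_right (hP x) (condPr_le_one hP _ _)
    _ ≤ ∑ x, P x := sum_le_sum_of_subset_of_nonneg (filter_subset _ _) fun x _ _ => hP x
    _ = 1 := hP₁

lemma subsetMinimalSufficient_iff_card_eq (hmono : StrictMono (vgSuff f P))
    (hcard : ∀ S T : Finset (Fin n), #S = #T → vgSuff f P S = vgSuff f P T)
    (S T : Finset (Fin n)) :
    SubsetMinimalSufficient f P (vgSuff f P T) S ↔ #S = #T := by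
  refine ⟨fun ⟨hST, hmin⟩ => ?_, fun h => ⟨(hcard S T h).ge, fun S' hS' => ?_⟩⟩
  · rcases lt_trichotomy #S #T with hlt | heq | hgt
    · obtain ⟨U, hSU, -, hU⟩ :=
        exists_subsuperset_card_eq (subset_univ S) hlt.le (card_le_card (subset_univ T))
      have hSU' : S ⊂ U := ssubset_of_subset_of_ne hSU (by rintro rfl; omega)
      exact absurd hST (not_le.2 ((hmono hSU').trans_eq (hcard U T hU)))
    · exact heq
    · obtain ⟨U, hUS, hU⟩ := exists_subset_card_eq hgt.le
      have hUS' : U ⊂ S := ssubset_of_subset_of_ne hUS (by rintro rfl; omega)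
      exact absurd (hcard U T hU) (hmin U hUS').ne
  · exact (hmono hS').trans_eq (hcard S T h)

end SufficientValue

section PairCount

variable {n : ℕ}

def pairCount (R : (Fin n → Bool) → (Fin n → Bool) → Prop) [DecidableRel R]
    (T : Finset (Fin n)) : ℕ :=
  ∑ x, #{z | R x z ∧ ∀ i ∈ T, z i = x i}

lemma card_filter_agree (x : Fin n → Bool) (S : Finset (Fin n)) :
    #{z : Fin n → Bool | ∀ i ∈ S, z i = x i} = 2 ^ #Sᶜ := by
  have : ({z : Fin n → Bool | ∀ i ∈ S, z i = x i} : Finset _) =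
      Fintype.piFinset fun i => if i ∈ S then {x i} else univ := by
    ext z
    simp only [mem_filter, mem_univ, true_and, Fintype.mem_piFinset]
    refine forall_congr' fun i => ?_
    split_ifs with hi <;> simp [hi]
  rw [this, Fintype.card_piFinset]
  simp only [apply_ite card, card_singleton, card_univ, Fintype.card_bool, prod_ite,
    prod_const_one, prod_const, one_mul]
  congr 2
  ext
  simp

lemma vgSuff_of_uniform {f : (Fin n → Bool) → Bool} {P : (Fin n → Bool) → ℝ}
    (hP : ∀ x, P x = 1 / 2 ^ n) (S : Finset (Fin n)) :
    vgSuff f P S = pairCount (fun x z => f z = f x) S / (2 ^ n * 2 ^ #Sᶜ) := by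
  have hPpos : ∀ x, 0 < P x := fun x => by rw [hP]; positivity
  unfold vgSuff condPr pairCount
  rw [filter_true_of_mem fun x _ => hPpos x]
  simp only [hP, ← sum_filter, sum_const, nsmul_eq_mul, card_filter_agree]
  push_cast
  rw [sum_div]
  refine sum_congr rfl fun x _ => ?_
  field_simp

lemma pairCount_map_perm (R : (Fin n → Bool) → (Fin n → Bool) → Prop) [DecidableRel R]
    (σ : Equiv.Perm (Fin n)) (hR : ∀ x z, R (x ∘ σ) (z ∘ σ) ↔ R x z) (S : Finset (Fin n)) :
    pairCount R (S.map σ.toEmbedding) = pairCount R S := by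
  simp only [pairCount, card_filter]
  refine Fintype.sum_bijective (· ∘ σ) σ.bijective.comp_right _ _ fun x => ?_
  refine Fintype.sum_bijective (· ∘ σ) σ.bijective.comp_right _ _ fun z => ?_
  simp only [forall_mem_map, Equiv.coe_toEmbedding, comp_apply, hR]

lemma vgSuff_eq_of_card_eq {f : (Fin n → Bool) → Bool} {P : (Fin n → Bool) → ℝ}
    (hP : ∀ x, P x = 1 / 2 ^ n) (hf : ∀ (σ : Equiv.Perm (Fin n)) x, f (x ∘ σ) = f x)
    {S T : Finset (Fin n)} (h : #S = #T) : vgSuff f P S = vgSuff f P T := by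
  obtain ⟨σ, rfl⟩ := Equiv.Perm.exists_map_finset_eq S T h
  rw [vgSuff_of_uniform hP, vgSuff_of_uniform hP, card_compl, card_compl, card_map,
    pairCount_map_perm _ σ fun x z => by rw [hf, hf]]

end PairCount

section Flip

variable {n : ℕ}

def flipAt (j : Fin n) : Equiv.Perm (Fin n → Bool) :=
  Involutive.toPerm (fun x => update x j (!x j)) fun x => by simp

lemma flipAt_apply (j : Fin n) (x : Fin n → Bool) (i : Fin n) :
    flipAt j x i = if i = j then !x j else x i :=
  update_apply x j (!x j) i

lemma flipAt_apply_self (j : Fin n) (x : Fin n → Bool) : flipAt j x j = !x j := by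
  simp [flipAt_apply]

lemma flipAt_apply_of_ne {i j : Fin n} (h : i ≠ j) (x : Fin n → Bool) : flipAt j x i = x i := by
  simp [flipAt_apply, h]

lemma flipAt_flipAt (j : Fin n) (x : Fin n → Bool) : flipAt j (flipAt j x) = x := by
  ext i
  by_cases h : i = j <;> simp [flipAt_apply, h]

lemma flipAt_apply_eq_iff (j : Fin n) (x z : Fin n → Bool) (i : Fin n) :
    flipAt j z i = flipAt j x i ↔ z i = x i := by
  by_cases h : i = j <;> simp [flipAt_apply, h]

lemma flipAt_le_of_apply_eq_true {j : Fin n} {x : Fin n → Bool} (hx : x j = true) :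
    flipAt j x ≤ x := fun i => by
  by_cases h : i = j <;> simp [flipAt_apply, h, hx]

lemma le_flipAt_of_apply_eq_false {j : Fin n} {x : Fin n → Bool} (hx : x j = false) :
    x ≤ flipAt j x := fun i => by
  by_cases h : i = j <;> simp [flipAt_apply, h, hx]

lemma pairCount_flipAt (R : (Fin n → Bool) → (Fin n → Bool) → Prop) [DecidableRel R]
    (j : Fin n) (T : Finset (Fin n)) :
    pairCount (fun x z => R (flipAt j x) (flipAt j z)) T = pairCount R T := by
  simp only [pairCount, card_filter]
  symm
  rw [← Equiv.sum_comp (flipAt j)]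
  refine sum_congr rfl fun x _ => ?_
  rw [← Equiv.sum_comp (flipAt j)]
  simp only [flipAt_apply_eq_iff]

lemma pairCount_eq_add_insert (R : (Fin n → Bool) → (Fin n → Bool) → Prop) [DecidableRel R]
    {j : Fin n} {S : Finset (Fin n)} (hj : j ∉ S) :
    pairCount R S =
      pairCount R (insert j S) + pairCount (fun x z => R x (flipAt j z)) (insert j S) := by
  have hflip : ∀ x z : Fin n → Bool, (∀ i ∈ S, flipAt j z i = x i) ↔ ∀ i ∈ S, z i = x i :=
    fun x z => forall₂_congr fun i hi => by rw [flipAt_apply_of_ne (ne_of_mem_of_not_mem hi hj)]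
  simp only [pairCount, card_filter]
  rw [← sum_add_distrib]
  refine sum_congr rfl fun x _ => ?_
  rw [← Equiv.sum_comp (flipAt j)
    fun z => if R x (flipAt j z) ∧ ∀ i ∈ insert j S, z i = x i then 1 else 0, ← sum_add_distrib]
  refine sum_congr rfl fun z _ => ?_
  simp only [forall_mem_insert, hflip, flipAt_apply_self, flipAt_flipAt]
  cases z j <;> cases x j <;> simp

lemma ite_add_ite_le_of_monotone {f : (Fin n → Bool) → Bool} (hf : Monotone f) (j : Fin n)
    {x z : Fin n → Bool} (h : z j = x j) :
    (if f (flipAt j z) = f x then 1 else 0) + (if f z = f (flipAt j x) then 1 else 0) ≤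
      (if f z = f x then 1 else 0) + (if f (flipAt j z) = f (flipAt j x) then 1 else 0) := by
  have hbool : ∀ a a' b b' : Bool, (a' ≤ a ∧ b' ≤ b) ∨ (a ≤ a' ∧ b ≤ b') →
      (if b' = a then 1 else 0) + (if b = a' then 1 else 0) ≤
        (if b = a then 1 else 0) + (if b' = a' then 1 else 0) := by decide
  apply hbool
  cases hx : x j
  · exact .inr ⟨hf (le_flipAt_of_apply_eq_false hx),
      hf (le_flipAt_of_apply_eq_false (h.trans hx))⟩
  · exact .inl ⟨hf (flipAt_le_of_apply_eq_true hx),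
      hf (flipAt_le_of_apply_eq_true (h.trans hx))⟩

lemma pairCount_flipAt_add_lt {f : (Fin n → Bool) → Bool} (hf : Monotone f) {j : Fin n}
    {w : Fin n → Bool} (hw : f (update w j false) ≠ f (update w j true))
    {T : Finset (Fin n)} (hj : j ∈ T) :
    pairCount (fun x z => f (flipAt j z) = f x) T + pairCount (fun x z => f z = f (flipAt j x)) T <
      pairCount (fun x z => f z = f x) T +
        pairCount (fun x z => f (flipAt j z) = f (flipAt j x)) T := by
  simp only [pairCount, card_filter, ← sum_add_distrib]
  rw [← Fintype.sum_prod_type', ← Fintype.sum_prod_type']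
  refine sum_lt_sum (fun p _ => ?_) ⟨(update w j true, update w j true), mem_univ _, ?_⟩
  · by_cases hE : ∀ i ∈ T, p.2 i = p.1 i
    · simpa only [and_iff_left hE] using ite_add_ite_le_of_monotone hf j (hE j hj)
    · simp only [hE, and_false, if_false, le_refl]
  · have hflip : flipAt j (update w j true) = update w j false := by
      ext i
      by_cases h : i = j <;> simp [flipAt_apply, h]
    simp [hflip, hw, hw.symm]

lemma pairCount_lt_two_mul_insert {f : (Fin n → Bool) → Bool} (hf : Monotone f)
    {j : Fin n} {w : Fin n → Bool} (hw : f (update w j false) ≠ f (update w j true))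
    {S : Finset (Fin n)} (hj : j ∉ S) :
    pairCount (fun x z => f z = f x) S < 2 * pairCount (fun x z => f z = f x) (insert j S) := by
  have hsplit := pairCount_eq_add_insert (fun x z => f z = f x) hj
  have hlt := pairCount_flipAt_add_lt hf hw (mem_insert_self j S)
  have h₁ := pairCount_flipAt (fun x z => f z = f x) j (insert j S)
  have h₂ := pairCount_flipAt (fun x z => f (flipAt j z) = f x) j (insert j S)
  simp only [flipAt_flipAt] at h₂
  omega

lemma vgSuff_lt_vgSuff_insert {f : (Fin n → Bool) → Bool} {P : (Fin n → Bool) → ℝ}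
    (hP : ∀ x, P x = 1 / 2 ^ n) (hf : Monotone f) {j : Fin n} {w : Fin n → Bool}
    (hw : f (update w j false) ≠ f (update w j true)) {S : Finset (Fin n)} (hj : j ∉ S) :
    vgSuff f P S < vgSuff f P (insert j S) := by
  have hcompl : #Sᶜ = #(insert j S)ᶜ + 1 := by
    rw [compl_insert, card_erase_add_one (mem_compl.2 hj)]
  have hcount : (pairCount (fun x z => f z = f x) S : ℝ) <
      2 * pairCount (fun x z => f z = f x) (insert j S) := by
    exact_mod_cast pairCount_lt_two_mul_insert hf hw hj
  rw [vgSuff_of_uniform hP, vgSuff_of_uniform hP, hcompl, pow_succ,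
    div_lt_div_iff₀ (by positivity) (by positivity)]
  have := mul_lt_mul_of_pos_right hcount (by positivity : (0 : ℝ) < 2 ^ n * 2 ^ #(insert j S)ᶜ)
  linarith

lemma strictMono_vgSuff {f : (Fin n → Bool) → Bool} {P : (Fin n → Bool) → ℝ}
    (hP : ∀ x, P x = 1 / 2 ^ n) (hf : Monotone f)
    (hpiv : ∀ j, ∃ w, f (update w j false) ≠ f (update w j true)) :
    StrictMono (vgSuff f P) :=
  Finset.strictMono_iff_forall_lt_insert.2 fun _ j hj =>
    (hpiv j).elim fun _ hw => vgSuff_lt_vgSuff_insert hP hf hw hj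

end Flip

section Threshold

variable {n t : ℕ} {f : (Fin n → Bool) → Bool}

lemma monotone_of_eq_threshold (hf : ∀ x, f x = decide (t ≤ #{i | x i = true})) :
    Monotone f := by
  intro x y hxy
  have hcard : #{i | x i = true} ≤ #{i | y i = true} :=
    card_le_card (monotone_filter_right _ fun i _ => Bool.le_iff_imp.1 (hxy i))
  rw [hf, hf]
  exact Bool.le_iff_imp.2 fun h => decide_eq_true ((of_decide_eq_true h).trans hcard)

lemma apply_comp_perm_of_eq_threshold (hf : ∀ x, f x = decide (t ≤ #{i | x i = true}))
    (σ : Equiv.Perm (Fin n)) (x : Fin n → Bool) : f (x ∘ σ) = f x := by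
  rw [hf, hf, card_filter, card_filter]
  congr 2
  exact Equiv.sum_comp σ fun i => if x i = true then 1 else 0

lemma exists_update_ne_of_eq_threshold (hf : ∀ x, f x = decide (t ≤ #{i | x i = true}))
    (ht₀ : 0 < t) (htn : t ≤ n) (j : Fin n) :
    ∃ w, f (update w j false) ≠ f (update w j true) := by
  obtain ⟨U, hU, hUcard⟩ :=
    exists_subset_card_eq (s := univ.erase j) (n := t - 1)
      (by rw [card_erase_of_mem (mem_univ j), card_univ, Fintype.card_fin]; omega)
  have hjU : j ∉ U := fun h => (mem_erase.1 (hU h)).1 rfl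
  refine ⟨fun i => decide (i ∈ U), ?_⟩
  have hfalse : ({i | update (fun i => decide (i ∈ U)) j false i = true} : Finset _) = U := by
    ext i
    by_cases h : i = j <;> simp [update_apply, h, hjU]
  have htrue : ({i | update (fun i => decide (i ∈ U)) j true i = true} : Finset _) =
      insert j U := by
    ext i
    by_cases h : i = j <;> simp [update_apply, h]
  rw [hf, hf, hfalse, htrue, card_insert_of_notMem hjU, hUcard]
  simp only [ne_eq, decide_eq_decide]
  omega

end Threshold

/-- for the majority function on `{0,1}^{2k+1}` under the uniform
distribution, there is a threshold `δ ∈ [0,1]` such that the subset-minimal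
global `δ`-sufficient reasons are exactly the subsets of size `k+1`; in
particular their number is the binomial coefficient `C(2k+1, k+1)`. -/
theorem majority_many_subset_minimal_reasons (k : ℕ)
    (f : (Fin (2 * k + 1) → Bool) → Bool)
    (hf : ∀ x, f x = decide (k + 1 ≤ (Finset.univ.filter (fun i => x i = true)).card))
    (P : (Fin (2 * k + 1) → Bool) → ℝ) (hP : ∀ x, P x = 1 / 2 ^ (2 * k + 1)) :
    ∃ δ : ℝ, 0 ≤ δ ∧ δ ≤ 1 ∧
      (∀ S : Finset (Fin (2 * k + 1)),
        SubsetMinimalSufficient f P δ S ↔ S.card = k + 1) ∧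
      {S : Finset (Fin (2 * k + 1)) | SubsetMinimalSufficient f P δ S}.ncard =
        Nat.choose (2 * k + 1) (k + 1) := by
  have hmono : StrictMono (vgSuff f P) := strictMono_vgSuff hP (monotone_of_eq_threshold hf)
    (exists_update_ne_of_eq_threshold hf (by omega) (by omega))
  have hcard : ∀ S T : Finset (Fin (2 * k + 1)), #S = #T → vgSuff f P S = vgSuff f P T :=
    fun _ _ => vgSuff_eq_of_card_eq hP (apply_comp_perm_of_eq_threshold hf)
  have hP₀ : ∀ x, 0 ≤ P x := fun x => by rw [hP]; positivity
  have hP₁ : ∑ x, P x = 1 := by simp [hP]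
  obtain ⟨T, -, hT⟩ := exists_subset_card_eq (s := (univ : Finset (Fin (2 * k + 1)))) (n := k + 1)
    (by rw [card_univ, Fintype.card_fin]; omega)
  have hiff : ∀ S, SubsetMinimalSufficient f P (vgSuff f P T) S ↔ #S = k + 1 :=
    fun S => hT ▸ subsetMinimalSufficient_iff_card_eq hmono hcard S T
  refine ⟨vgSuff f P T, vgSuff_nonneg hP₀ T, vgSuff_le_one hP₀ hP₁ T, hiff, ?_⟩
  have hset : {S | SubsetMinimalSufficient f P (vgSuff f P T) S} =
      (powersetCard (k + 1) (univ : Finset (Fin (2 * k + 1))) : Set _) := by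
    ext S
    simp [hiff]
  rw [hset, Set.ncard_coe_finset, card_powersetCard, card_univ, Fintype.card_fin]
end

section
/- Let f : {0,1}^n → {0,1} be a Boolean classifier and let D be a product (feature-independent) distribution on {0,1}^n. Then the global sufficient value function v^g_suff is supermodular: for all S ⊆ S' ⊆ {1,…,n} and all i ∉ S', v^g_suff(S ∪ {i}) − v^g_suff(S) ≤ v^g_suff(S' ∪ {i}) − v^g_suff(S'). -/
open Finset

namespace VGSaux
variable {n : ℕ}

/-- Merge: take coordinates in `S` from `x`, the rest from `y`. -/
def mg (S : Finset (Fin n)) (x y : Fin n → Bool) : Fin n → Bool :=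
  fun j => if j ∈ S then x j else y j

lemma mg_mg_left {S T : Finset (Fin n)} (hST : S ⊆ T) (x y z : Fin n → Bool) :
    mg S (mg T x y) z = mg S x z := by
  funext j
  by_cases h : j ∈ S
  · simp [mg, h, hST h]
  · simp [mg, h]

lemma mg_swap_invol (S : Finset (Fin n)) (x y : Fin n → Bool) :
    mg S (mg S x y) (mg S y x) = x := by
  funext j; by_cases h : j ∈ S <;> simp [mg, h]

lemma mg_assoc {T U : Finset (Fin n)} (hTU : T ⊆ U) (x y z : Fin n → Bool) :
    mg U (mg T x y) z = mg T x (mg U y z) := by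
  funext j
  by_cases hT : j ∈ T
  · simp [mg, hT, hTU hT]
  · by_cases hU : j ∈ U <;> simp [mg, hT, hU]

lemma mg_cross {S S' : Finset (Fin n)} {i : Fin n} (hSS' : S ⊆ S') (hi : i ∉ S')
    (x y z : Fin n → Bool) :
    mg S' (mg (insert i S) x y) z = mg S x (mg S' y z) := by
  funext j
  by_cases hS : j ∈ S
  · simp [mg, hS, hSS' hS, mem_insert_of_mem hS]
  · by_cases hS' : j ∈ S'
    · have hji : j ≠ i := fun h => hi (h ▸ hS')
      simp [mg, hS, hS', hji]
    · by_cases hji : j = i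
      · subst hji
        simp [mg, hS', hS, mem_insert_self]
      · simp [mg, hS, hS', hji]

variable (f : (Fin n → Bool) → Bool) (P : (Fin n → Bool) → ℝ)

/-- Real-valued indicator of `f`. -/
noncomputable def Fv (x : Fin n → Bool) : ℝ := if f x then 1 else 0

/-- Conditional expectation of `φ` given the coordinates in `S` fixed from `x`. -/
noncomputable def ce (S : Finset (Fin n)) (φ : (Fin n → Bool) → ℝ) (x : Fin n → Bool) : ℝ :=
  ∑ y, P y * φ (mg S x y)

/-- `g S x = Pr(f z = 1 | z_S = x_S)`. -/
noncomputable def gv (S : Finset (Fin n)) (x : Fin n → Bool) : ℝ :=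
  ce P S (Fv f) x

/-- `w S = E[F · g_S] (= E[g_S²])`. -/
noncomputable def wv (S : Finset (Fin n)) : ℝ :=
  ∑ x, P x * (Fv f x * gv f P S x)

/-- Absorb a total-mass factor. -/
lemma sum_absorb (hP1 : ∑ x, P x = 1) (c : ℝ) :
    ∑ y : Fin n → Bool, P y * c = c := by
  rw [← Finset.sum_mul, hP1, one_mul]

variable (hswap : ∀ (S : Finset (Fin n)) x y, P (mg S x y) * P (mg S y x) = P x * P y)
variable (hP1 : ∑ x, P x = 1)

section
include hswap

/-- The fundamental reindexing identity for product measures. -/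
lemma swap_sum (S : Finset (Fin n)) (h : (Fin n → Bool) → (Fin n → Bool) → ℝ) :
    ∑ x, ∑ y, P x * P y * h (mg S x y) (mg S y x) = ∑ x, ∑ y, P x * P y * h x y := by
  classical
  have pairsum : ∀ (k : (Fin n → Bool) → (Fin n → Bool) → ℝ),
      ∑ q : (Fin n → Bool) × (Fin n → Bool), k q.1 q.2 = ∑ x, ∑ y, k x y := by
    intro k
    rw [← Finset.univ_product_univ, Finset.sum_product]
  let e : ((Fin n → Bool) × (Fin n → Bool)) ≃ ((Fin n → Bool) × (Fin n → Bool)) :=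
    { toFun := fun q => (mg S q.1 q.2, mg S q.2 q.1)
      invFun := fun q => (mg S q.1 q.2, mg S q.2 q.1)
      left_inv := fun q => Prod.ext (mg_swap_invol S q.1 q.2) (mg_swap_invol S q.2 q.1)
      right_inv := fun q => Prod.ext (mg_swap_invol S q.1 q.2) (mg_swap_invol S q.2 q.1) }
  have comp := Equiv.sum_comp e (fun q : (Fin n → Bool) × (Fin n → Bool) =>
    P q.1 * P q.2 * h q.1 q.2)
  have comp' : ∑ q : (Fin n → Bool) × (Fin n → Bool),
      P q.1 * P q.2 * h (mg S q.1 q.2) (mg S q.2 q.1)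
      = ∑ q : (Fin n → Bool) × (Fin n → Bool), P q.1 * P q.2 * h q.1 q.2 := by
    rw [← comp]
    refine Fintype.sum_congr _ _ fun q => ?_
    show _ = P (mg S q.1 q.2) * P (mg S q.2 q.1) * h (mg S q.1 q.2) (mg S q.2 q.1)
    rw [hswap S q.1 q.2]
  rw [← pairsum, ← pairsum, comp']

include hP1

/-- Conditional expectation preserves the mean. -/
lemma sum_mul_ce (S : Finset (Fin n)) (φ : (Fin n → Bool) → ℝ) :
    ∑ x, P x * ce P S φ x = ∑ x, P x * φ x := by
  have h1 : ∑ x, P x * ce P S φ x = ∑ x, ∑ y, P x * P y * φ (mg S x y) := by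
    refine Fintype.sum_congr _ _ fun x => ?_
    rw [ce, Finset.mul_sum]
    exact Fintype.sum_congr _ _ fun y => by ring
  have h2 := swap_sum P hswap S (fun u _ => φ u)
  rw [h1, h2]
  refine Fintype.sum_congr _ _ fun x => ?_
  have h3 : ∑ y, P x * P y * φ x = ∑ y, P y * (P x * φ x) :=
    Fintype.sum_congr _ _ fun y => by ring
  rw [h3, sum_absorb P hP1]

/-- `E[g_T · g_S] = E[F · g_S] = w S` for `S ⊆ T`. -/
lemma sum_g_mul {S T : Finset (Fin n)} (hST : S ⊆ T) :
    ∑ x, P x * (gv f P T x * gv f P S x) = wv f P S := by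
  have h1 : ∑ x, P x * (gv f P T x * gv f P S x)
      = ∑ x, ∑ y, P x * P y * (Fv f (mg T x y) * gv f P S (mg T x y)) := by
    refine Fintype.sum_congr _ _ fun x => ?_
    rw [gv, ce, Finset.sum_mul, Finset.mul_sum]
    refine Fintype.sum_congr _ _ fun y => ?_
    have hg : gv f P S (mg T x y) = gv f P S x := by
      rw [gv, gv, ce, ce]
      refine Fintype.sum_congr _ _ fun z => ?_
      rw [mg_mg_left hST]
    rw [hg]; ring
  have h2 := swap_sum P hswap T (fun u _ => Fv f u * gv f P S u)
  rw [h1, h2, wv]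
  refine Fintype.sum_congr _ _ fun x => ?_
  have h3 : ∑ y, P x * P y * (Fv f x * gv f P S x)
      = ∑ y, P y * (P x * (Fv f x * gv f P S x)) :=
    Fintype.sum_congr _ _ fun y => by ring
  rw [h3, sum_absorb P hP1]

/-- `E[(g_T - g_S)²] = w T - w S` for `S ⊆ T`. -/
lemma sum_sq_diff {S T : Finset (Fin n)} (hST : S ⊆ T) :
    ∑ x, P x * (gv f P T x - gv f P S x) ^ 2 = wv f P T - wv f P S := by
  have hT := sum_g_mul f P hswap hP1 (subset_refl T)
  have hS := sum_g_mul f P hswap hP1 hST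
  have hSS := sum_g_mul f P hswap hP1 (subset_refl S)
  have expand : ∀ x : Fin n → Bool, P x * (gv f P T x - gv f P S x) ^ 2
      = P x * (gv f P T x * gv f P T x) - 2 * (P x * (gv f P T x * gv f P S x))
        + P x * (gv f P S x * gv f P S x) := fun x => by ring
  rw [Fintype.sum_congr _ _ expand, Finset.sum_add_distrib, Finset.sum_sub_distrib,
    ← Finset.mul_sum, hT, hS, hSS]
  ring

/-- Tower property: `E[g_U | T] = g_T` when `T ⊆ U`. -/
lemma ce_gv_of_subset {T U : Finset (Fin n)} (hTU : T ⊆ U) (x : Fin n → Bool) :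
    ce P T (gv f P U) x = gv f P T x := by
  have h1 : ce P T (gv f P U) x = ∑ y, ∑ z, P y * P z * Fv f (mg T x (mg U y z)) := by
    rw [ce]
    refine Fintype.sum_congr _ _ fun y => ?_
    rw [gv, ce, Finset.mul_sum]
    refine Fintype.sum_congr _ _ fun z => ?_
    rw [← mg_assoc hTU]; ring
  have h2 := swap_sum P hswap U (fun u _ => Fv f (mg T x u))
  rw [h1, h2, gv, ce]
  refine Fintype.sum_congr _ _ fun y => ?_
  have h3 : ∑ z, P y * P z * Fv f (mg T x y) = ∑ z, P z * (P y * Fv f (mg T x y)) :=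
    Fintype.sum_congr _ _ fun z => by ring
  rw [h3, sum_absorb P hP1]

/-- Cross tower property: `E[g_{S'} | S ∪ {i}] = g_S` when `S ⊆ S'`, `i ∉ S'`. -/
lemma ce_gv_cross {S S' : Finset (Fin n)} {i : Fin n} (hSS' : S ⊆ S') (hi : i ∉ S')
    (x : Fin n → Bool) :
    ce P (insert i S) (gv f P S') x = gv f P S x := by
  have h1 : ce P (insert i S) (gv f P S') x
      = ∑ y, ∑ z, P y * P z * Fv f (mg S x (mg S' y z)) := by
    rw [ce]
    refine Fintype.sum_congr _ _ fun y => ?_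
    rw [gv, ce, Finset.mul_sum]
    refine Fintype.sum_congr _ _ fun z => ?_
    rw [← mg_cross hSS' hi]; ring
  have h2 := swap_sum P hswap S' (fun u _ => Fv f (mg S x u))
  rw [h1, h2, gv, ce]
  refine Fintype.sum_congr _ _ fun y => ?_
  have h3 : ∑ z, P y * P z * Fv f (mg S x y) = ∑ z, P z * (P y * Fv f (mg S x y)) :=
    Fintype.sum_congr _ _ fun z => by ring
  rw [h3, sum_absorb P hP1]

end

/-- Jensen / Cauchy–Schwarz for the conditional expectation. -/
lemma ce_sq_le (hP0 : ∀ x, 0 ≤ P x) (hP1 : ∑ x, P x = 1)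
    (T : Finset (Fin n)) (φ : (Fin n → Bool) → ℝ) (x : Fin n → Bool) :
    (ce P T φ x) ^ 2 ≤ ce P T (fun z => (φ z) ^ 2) x := by
  have h := Finset.sum_sq_le_sum_mul_sum_of_sq_eq_mul (Finset.univ : Finset (Fin n → Bool))
    (r := fun y => P y * φ (mg T x y)) (f := fun y => P y)
    (g := fun y => P y * (φ (mg T x y)) ^ 2)
    (fun y _ => hP0 y) (fun y _ => mul_nonneg (hP0 y) (sq_nonneg _))
    (fun y _ => by ring)
  rw [hP1, one_mul] at h
  exact h

section
include hswap hP1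


/-- Key identity: the conditional sum factors through `ce`. -/
lemma key_filter (S : Finset (Fin n)) (x : Fin n → Bool) (φ : (Fin n → Bool) → ℝ) :
    (∑ z, if (∀ j ∈ S, z j = x j) then P z * φ z else 0)
      = (∑ z, if (∀ j ∈ S, z j = x j) then P z else 0) * ce P S φ x := by
  classical
  have lhs1 : (∑ z, if (∀ j ∈ S, z j = x j) then P z * φ z else 0)
      = ∑ z, ∑ y, P z * P y * (if (∀ j ∈ S, z j = x j) then φ z else 0) := by
    refine Fintype.sum_congr _ _ fun z => ?_
    have h3 : ∑ y, P z * P y * (if (∀ j ∈ S, z j = x j) then φ z else 0)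
        = ∑ y, P y * (P z * (if (∀ j ∈ S, z j = x j) then φ z else 0)) :=
      Fintype.sum_congr _ _ fun y => by ring
    rw [h3, sum_absorb P hP1]
    split_ifs <;> simp
  have h2 := swap_sum P hswap S (fun u _ => if (∀ j ∈ S, u j = x j) then φ u else 0)
  have lhs2 : (∑ z, ∑ y, P z * P y * (if (∀ j ∈ S, z j = x j) then φ z else 0))
      = ∑ z, ∑ y, P z * P y *
          (if (∀ j ∈ S, z j = x j) then φ (mg S x y) else 0) := by
    rw [← h2]
    refine Fintype.sum_congr _ _ fun z => Fintype.sum_congr _ _ fun y => ?_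
    congr 1
    have hc : (∀ j ∈ S, mg S z y j = x j) ↔ (∀ j ∈ S, z j = x j) := by
      refine forall₂_congr fun j hj => ?_
      simp [mg, hj]
    by_cases hz : ∀ j ∈ S, z j = x j
    · rw [if_pos (hc.mpr hz), if_pos hz]
      congr 1
      funext j
      by_cases hj : j ∈ S
      · simp [mg, hj, hz j hj]
      · simp [mg, hj]
    · rw [if_neg (fun h => hz (hc.mp h)), if_neg hz]
  rw [lhs1, lhs2, Finset.sum_mul]
  refine Fintype.sum_congr _ _ fun z => ?_
  by_cases hz : ∀ j ∈ S, z j = x j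
  · simp only [if_pos hz, ce, Finset.mul_sum]
    exact Fintype.sum_congr _ _ fun y => by ring
  · simp [if_neg hz]

lemma condPr_eq (hP0 : ∀ x, 0 ≤ P x) (S : Finset (Fin n)) (x : Fin n → Bool)
    (hx : 0 < P x) :
    condPr P (fun z => f z = f x) (fun z => ∀ j ∈ S, z j = x j)
      = 1 - Fv f x - gv f P S x + 2 * (Fv f x * gv f P S x) := by
  classical
  have hdef : condPr P (fun z => f z = f x) (fun z => ∀ j ∈ S, z j = x j)
      = (∑ z, if (f z = f x) ∧ (∀ j ∈ S, z j = x j) then P z else 0)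
        / (∑ z, if (∀ j ∈ S, z j = x j) then P z else 0) := by
    rw [condPr]
    congr 1 <;> exact Finset.sum_congr rfl fun z _ => by split_ifs <;> rfl
  rw [hdef]
  have hD0 : 0 < ∑ z, if (∀ j ∈ S, z j = x j) then P z else 0 := by
    have hterm : ∀ z ∈ (Finset.univ : Finset (Fin n → Bool)),
        (0:ℝ) ≤ if (∀ j ∈ S, z j = x j) then P z else 0 := fun z _ => by
      split_ifs
      · exact hP0 z
      · exact le_refl 0
    have hx' : (if (∀ j ∈ S, x j = x j) then P x else 0) = P x :=
      if_pos (fun j _ => rfl)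
    calc (0:ℝ) < P x := hx
      _ = _ := hx'.symm
      _ ≤ _ := Finset.single_le_sum hterm (Finset.mem_univ x)
  have hnum : (∑ z, if (f z = f x) ∧ (∀ j ∈ S, z j = x j) then P z else 0)
      = ∑ z, if (∀ j ∈ S, z j = x j) then
          P z * (if f z = f x then (1:ℝ) else 0) else 0 := by
    refine Fintype.sum_congr _ _ fun z => ?_
    by_cases h1 : f z = f x <;> by_cases h2 : ∀ j ∈ S, z j = x j <;>
      simp [h1, h2]
  rw [hnum, key_filter P hswap hP1 S x (fun z => if f z = f x then (1:ℝ) else 0),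
    mul_div_cancel_left₀ _ hD0.ne']
  have hψ : ∀ z, (if f z = f x then (1:ℝ) else 0)
      = 1 - Fv f x - Fv f z + 2 * (Fv f x * Fv f z) := by
    intro z
    cases hfz : f z <;> cases hfx : f x <;> simp [Fv, hfz, hfx] <;> norm_num
  have hce : ce P S (fun z => if f z = f x then (1:ℝ) else 0) x
      = ∑ y, (P y * (1 - Fv f x)
          + (2 * Fv f x - 1) * (P y * Fv f (mg S x y))) := by
    rw [ce]
    refine Fintype.sum_congr _ _ fun y => ?_
    rw [hψ]
    ring
  rw [hce, Finset.sum_add_distrib, sum_absorb P hP1, ← Finset.mul_sum]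
  have hg : ∑ y, P y * Fv f (mg S x y) = gv f P S x := rfl
  rw [hg]
  ring

lemma vgSuff_eq (hP0 : ∀ x, 0 ≤ P x) (S : Finset (Fin n)) :
    vgSuff f P S = 1 - 2 * (∑ x, P x * Fv f x) + 2 * wv f P S := by
  classical
  rw [vgSuff]
  have step1 : ∑ x ∈ Finset.univ.filter (fun x => 0 < P x),
        P x * condPr P (fun z => f z = f x) (fun z => ∀ i ∈ S, z i = x i)
      = ∑ x ∈ Finset.univ.filter (fun x => 0 < P x),
        P x * (1 - Fv f x - gv f P S x + 2 * (Fv f x * gv f P S x)) :=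
    Finset.sum_congr rfl fun x hx => by
      rw [condPr_eq f P hswap hP1 hP0 S x (Finset.mem_filter.mp hx).2]
  have step2 : ∑ x ∈ Finset.univ.filter (fun x => 0 < P x),
        P x * (1 - Fv f x - gv f P S x + 2 * (Fv f x * gv f P S x))
      = ∑ x, P x * (1 - Fv f x - gv f P S x + 2 * (Fv f x * gv f P S x)) := by
    refine Finset.sum_subset (Finset.filter_subset _ _) fun x _ hx => ?_
    have hx0 : P x = 0 := by
      by_contra hne
      exact hx (Finset.mem_filter.mpr ⟨Finset.mem_univ x,
        lt_of_le_of_ne (hP0 x) (Ne.symm hne)⟩)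
    rw [hx0, zero_mul]
  rw [step1, step2]
  have expand : ∀ x : Fin n → Bool,
      P x * (1 - Fv f x - gv f P S x + 2 * (Fv f x * gv f P S x))
        = P x - P x * Fv f x - P x * ce P S (Fv f) x
          + 2 * (P x * (Fv f x * gv f P S x)) := fun x => by
    rw [show ce P S (Fv f) x = gv f P S x from rfl]; ring
  rw [Fintype.sum_congr _ _ expand, Finset.sum_add_distrib, Finset.sum_sub_distrib,
    Finset.sum_sub_distrib, hP1, sum_mul_ce P hswap hP1 S (Fv f), ← Finset.mul_sum, ← wv]
  ring

end

end VGSaux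

open VGSaux

/-- for a Boolean classifier on `{0,1}^n` and a product
(feature-independent) distribution, the global sufficient value function is
supermodular. -/
theorem vgSuff_supermodular_bool {n : ℕ}
    (f : (Fin n → Bool) → Bool) (P : (Fin n → Bool) → ℝ)
    (hP0 : ∀ x, 0 ≤ P x) (hP1 : ∑ x, P x = 1)
    (p : Fin n → Bool → ℝ) (hp0 : ∀ j b, 0 ≤ p j b)
    (hprod : ∀ x, P x = ∏ j, p j (x j))
    (S S' : Finset (Fin n)) (hSS' : S ⊆ S') (i : Fin n) (hi : i ∉ S') :
    vgSuff f P (insert i S) - vgSuff f P S ≤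
      vgSuff f P (insert i S') - vgSuff f P S' := by
  classical
  have hswap : ∀ (T : Finset (Fin n)) x y, P (mg T x y) * P (mg T y x) = P x * P y := by
    intro T x y
    rw [hprod (mg T x y), hprod (mg T y x), hprod x, hprod y,
      ← Finset.prod_mul_distrib, ← Finset.prod_mul_distrib]
    refine Finset.prod_congr rfl fun j _ => ?_
    by_cases h : j ∈ T <;> simp [mg, h, mul_comm]
  have hST : S ⊆ insert i S := Finset.subset_insert i S
  have hS'U : S' ⊆ insert i S' := Finset.subset_insert i S'
  have hTU : insert i S ⊆ insert i S' := Finset.insert_subset_insert i hSS'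
  set Δ : (Fin n → Bool) → ℝ := fun z => gv f P (insert i S') z - gv f P S' z with hΔ
  have key : ∀ x, gv f P (insert i S) x - gv f P S x = ce P (insert i S) Δ x := by
    intro x
    have hlin : ce P (insert i S) Δ x
        = ce P (insert i S) (gv f P (insert i S')) x
          - ce P (insert i S) (gv f P S') x := by
      rw [ce, ce, ce, ← Finset.sum_sub_distrib]
      exact Fintype.sum_congr _ _ fun y => by rw [hΔ]; ring
    rw [hlin, ce_gv_of_subset f P hswap hP1 hTU, ce_gv_cross f P hswap hP1 hSS' hi]
  have hw : wv f P (insert i S) - wv f P S ≤ wv f P (insert i S') - wv f P S' := by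
    rw [← sum_sq_diff f P hswap hP1 hST, ← sum_sq_diff f P hswap hP1 hS'U]
    calc ∑ x, P x * (gv f P (insert i S) x - gv f P S x) ^ 2
        = ∑ x, P x * (ce P (insert i S) Δ x) ^ 2 :=
          Fintype.sum_congr _ _ fun x => by rw [key x]
      _ ≤ ∑ x, P x * ce P (insert i S) (fun z => (Δ z) ^ 2) x :=
          Finset.sum_le_sum fun x _ => mul_le_mul_of_nonneg_left
            (ce_sq_le P hP0 hP1 (insert i S) Δ x) (hP0 x)
      _ = ∑ x, P x * (Δ x) ^ 2 := sum_mul_ce P hswap hP1 (insert i S) (fun z => (Δ z) ^ 2)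
      _ = ∑ x, P x * (gv f P (insert i S') x - gv f P S' x) ^ 2 := rfl
  rw [vgSuff_eq f P hswap hP1 hP0 (insert i S), vgSuff_eq f P hswap hP1 hP0 S,
    vgSuff_eq f P hswap hP1 hP0 (insert i S'), vgSuff_eq f P hswap hP1 hP0 S']
  linarith
end
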